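/- arXiv:2510.19187 — 2 statements merged into one kernel-verified Lean document; each statement's English description precedes it below -/
import Mathlib

section
/- Let μ = μ_{R,B} be the self-affine measure for R = [[2,1],[0,2]] and B = {(0,0),(1,0)}. Then every orthogonal set Λ of μ satisfies dim_Be(Λ) ≤ 1. -/
open MeasureTheory Filter Set Metric
open scoped ENNReal

noncomputable section

/-- The plane with the Euclidean metric. -/
abbrev Plane : Type := EuclideanSpace ℝ (Fin 2)

/-- The point `(a, b)` of the Euclidean plane. -/
def pt (a b : ℝ) : Plane := WithLp.toLp 2 ![a, b]

/-- The self-affine measure `μ_{R,B}` for `R = [[2,1],[0,2]]`, `B = {(0,0),(1,0)}`: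
the pushforward of Lebesgue measure on `[0,1]` under `x ↦ (x, 0)`. -/
def muRB : Measure Plane :=
  Measure.map (fun x : ℝ => pt x 0) (volume.restrict (Set.Icc (0:ℝ) 1))

instance : IsProbabilityMeasure (volume.restrict (Set.Icc (0:ℝ) 1)) :=
  ⟨by simp [Real.volume_Icc]⟩

lemma measurable_pt0 : Measurable (fun x : ℝ => pt x 0) := by
  unfold pt
  refine (PiLp.continuous_toLp 2 _).measurable.comp (measurable_pi_lambda _ (fun i => ?_))
  fin_cases i
  · simp only [Matrix.cons_val_zero]
    exact measurable_id
  · simp only [Matrix.cons_val_one, Matrix.head_cons]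
    exact measurable_const

instance : IsProbabilityMeasure muRB :=
  Measure.isProbabilityMeasure_map measurable_pt0.aemeasurable

/-- The Fourier transform `μ̂(ξ) = ∫ e^{-2πi⟨ξ,x⟩} dμ(x)` of a measure on the plane. -/
def fourierTransform (μ : Measure Plane) (ξ : Plane) : ℂ :=
  ∫ x, Complex.exp ((-(2 * Real.pi * (inner ℝ ξ x : ℝ)) : ℝ) * Complex.I) ∂μ

/-- The exponential function `e_λ(x) = e^{-2πi⟨λ,x⟩}`. -/
def expFn (lam : Plane) : Plane → ℂ :=
  fun x => Complex.exp ((-(2 * Real.pi * (inner ℝ lam x : ℝ)) : ℝ) * Complex.I)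

lemma expFn_memLp (μ : Measure Plane) [IsFiniteMeasure μ] (lam : Plane) :
    MemLp (expFn lam) 2 μ := by
  refine MemLp.of_bound ?_ 1 ?_
  · apply Continuous.aestronglyMeasurable
    unfold expFn
    have h1 : Continuous fun x : Plane => (inner ℝ lam x : ℝ) :=
      continuous_const.inner continuous_id
    exact Complex.continuous_exp.comp
      ((Complex.continuous_ofReal.comp ((continuous_const.mul h1).neg)).mul continuous_const)
  · refine Eventually.of_forall fun x => ?_
    unfold expFn
    rw [Complex.norm_exp_ofReal_mul_I]

/-- The exponential `e_λ` as an element of `L²(μ)`. -/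
def expLp (μ : Measure Plane) [IsFiniteMeasure μ] (lam : Plane) : Lp ℂ 2 μ :=
  (expFn_memLp μ lam).toLp _

/-- `Λ` is an orthogonal set of `μ`: the exponentials `{e_λ : λ ∈ Λ}` form an
orthonormal family in `L²(μ)`. -/
def IsOrthogonalSet (μ : Measure Plane) [IsFiniteMeasure μ] (Λ : Set Plane) : Prop :=
  Orthonormal ℂ (fun lam : Λ => expLp μ lam)

/-- `Λ` is a spectrum of `μ`: the exponentials `{e_λ : λ ∈ Λ}` form an
orthonormal basis of `L²(μ)`. -/
def IsSpectrum (μ : Measure Plane) [IsFiniteMeasure μ] (Λ : Set Plane) : Prop :=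
  Orthonormal ℂ (fun lam : Λ => expLp μ lam) ∧
    (Submodule.span ℂ (Set.range (fun lam : Λ => expLp μ lam))).topologicalClosure = ⊤

/-- The upper `r`-Beurling density
`D_r^+(Λ) = limsup_{h→∞} sup_{x} #(Λ ∩ B(x,h)) / h^r`. -/
def beurlingDensity (r : ℝ) (Λ : Set Plane) : ℝ≥0∞ :=
  limsup (fun h : ℝ =>
    ⨆ x : Plane, ((Λ ∩ Metric.ball x h).encard : ℝ≥0∞) / ENNReal.ofReal (h ^ r)) atTop

/-- The upper `r`-density (centered at the origin)
`B_r^+(Λ) = limsup_{h→∞} #(Λ ∩ B(0,h)) / h^r`. -/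
def upperDensity (r : ℝ) (Λ : Set Plane) : ℝ≥0∞ :=
  limsup (fun h : ℝ =>
    ((Λ ∩ Metric.ball (0 : Plane) h).encard : ℝ≥0∞) / ENNReal.ofReal (h ^ r)) atTop

/-- The Beurling dimension `dim_Be(Λ) = sup {r > 0 : D_r^+(Λ) = ∞}`
(equal to `0` when the set is empty, by the convention `sSup ∅ = 0` in `ℝ`). -/
def beurlingDim (Λ : Set Plane) : ℝ :=
  sSup {r : ℝ | 0 < r ∧ beurlingDensity r Λ = ⊤}

/-- The Banach dimension `dim_Ba(Λ) = sup {r > 0 : B_r^+(Λ) = ∞}`. -/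
def banachDim (Λ : Set Plane) : ℝ :=
  sSup {r : ℝ | 0 < r ∧ upperDensity r Λ = ⊤}

/-- The sign of an integer, as a real number. -/
def isgn (n : ℤ) : ℝ := (Int.sign n : ℝ)

end

/-!
Against `μ`, which is Lebesgue measure on the segment `[0,1] × {0}`, the inner product
`⟨e_p, e_q⟩` is `∫₀¹ e^{-2πi (q₀ - p₀) t} dt`, and this vanishes only when `q₀ - p₀` is a nonzero
integer. Hence the first coordinates of the points of an orthogonal set are `1`-separated, a ball
of radius `h ≥ 1` contains at most `2h + 1 ≤ 3h` of them, and `D_r^+(Λ) < ∞` for every `r ≥ 1`.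
-/

open scoped NNReal

open Complex in
lemma exists_int_of_intervalIntegral_exp_eq_zero {c : ℂ}
    (h : ∫ t in (0:ℝ)..1, exp (c * t) = 0) : ∃ n : ℤ, n ≠ 0 ∧ c = n * (2 * Real.pi * I) := by
  have hc : c ≠ 0 := by
    rintro rfl
    simp at h
  have hexp : exp c = 1 := by
    rw [integral_exp_mul_complex hc] at h
    simpa [sub_eq_zero, hc] using h
  obtain ⟨n, rfl⟩ := exp_eq_one_iff.mp hexp
  refine ⟨n, ?_, rfl⟩
  rintro rfl
  simp at hc

lemma encard_le_floor_add_one_of_pairwise {S : Set ℝ} {a b : ℝ}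
    (hS : S.Pairwise fun s t => 1 ≤ |s - t|) (hab : S ⊆ Icc a b) :
    S.encard ≤ (⌊b - a⌋₊ + 1 : ℕ) := by
  have hinj : InjOn (fun t => ⌊t - a⌋₊) S := by
    intro s hs t ht (hst : ⌊s - a⌋₊ = ⌊t - a⌋₊)
    by_contra hne
    have hlt : |s - t| < 1 := by
      have := Nat.floor_le (sub_nonneg.2 (hab hs).1)
      have := Nat.lt_floor_add_one (s - a)
      have := Nat.floor_le (sub_nonneg.2 (hab ht).1)
      have := Nat.lt_floor_add_one (t - a)
      have : (⌊s - a⌋₊ : ℝ) = ⌊t - a⌋₊ := congrArg _ hst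
      rw [abs_sub_lt_iff]
      constructor <;> linarith
    exact (hS hs ht hne).not_gt hlt
  have hmaps : MapsTo (fun t => ⌊t - a⌋₊) S (Iic ⌊b - a⌋₊) := fun t ht =>
    Nat.floor_le_floor (by linarith [(hab ht).2])
  calc S.encard = ((fun t => ⌊t - a⌋₊) '' S).encard := hinj.encard_image.symm
    _ ≤ (Iic ⌊b - a⌋₊).encard := encard_le_encard hmaps.image_subset
    _ = (⌊b - a⌋₊ + 1 : ℕ) := by simp [encard_eq_coe_toFinset_card]

lemma encard_inter_ball_le_of_pairwise {X : Type*} [PseudoMetricSpace X] {f : X → ℝ}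
    (hf : LipschitzWith 1 f) {S : Set X} (hS : S.Pairwise fun p q => 1 ≤ |f p - f q|)
    (x : X) {h : ℝ} (hh : 0 ≤ h) :
    ((S ∩ ball x h).encard : ℝ≥0∞) ≤ ENNReal.ofReal (2 * h + 1) := by
  have hinj : InjOn f (S ∩ ball x h) := fun p hp q hq hpq => by
    by_contra hne
    have : 1 ≤ |f p - f q| := hS hp.1 hq.1 hne
    rw [hpq, sub_self, abs_zero] at this
    linarith
  have hsep : (f '' (S ∩ ball x h)).Pairwise fun s t => 1 ≤ |s - t| := by
    rintro _ ⟨p, hp, rfl⟩ _ ⟨q, hq, rfl⟩ hpq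
    exact hS hp.1 hq.1 fun hpq' => hpq (congrArg f hpq')
  have hmaps : MapsTo f (S ∩ ball x h) (Icc (f x - h) (f x + h)) := fun p hp => by
    have := (hf.dist_le_mul p x).trans_lt (by simpa using hp.2)
    rw [Real.dist_eq] at this
    exact ⟨by linarith [abs_lt.1 this], by linarith [abs_lt.1 this]⟩
  have hcard := encard_le_floor_add_one_of_pairwise hsep hmaps.image_subset
  rw [hinj.encard_image, show f x + h - (f x - h) = 2 * h by ring] at hcard
  calc ((S ∩ ball x h).encard : ℝ≥0∞) ≤ ((⌊2 * h⌋₊ + 1 : ℕ) : ℝ≥0∞) := by exact_mod_cast hcard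
    _ ≤ ENNReal.ofReal (2 * h + 1) := by
      rw [← ENNReal.ofReal_natCast]
      gcongr
      push_cast
      linarith [Nat.floor_le (by positivity : 0 ≤ 2 * h)]

lemma beurlingDensity_ne_top_of_encard_inter_ball_le {Λ : Set Plane} {c : ℝ≥0}
    (hΛ : ∀ x h, 1 ≤ h → ((Λ ∩ ball x h).encard : ℝ≥0∞) ≤ c * ENNReal.ofReal h)
    {r : ℝ} (hr : 1 ≤ r) : beurlingDensity r Λ ≠ ⊤ := by
  refine ne_top_of_le_ne_top (ENNReal.coe_ne_top (r := c))
    (limsup_le_of_le (by isBoundedDefault) ?_)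
  filter_upwards [eventually_ge_atTop 1] with h h1
  refine iSup_le fun x => ENNReal.div_le_of_le_mul ?_
  exact (hΛ x h h1).trans (by gcongr; exact Real.self_le_rpow_of_one_le h1 hr)

lemma beurlingDim_le_of_beurlingDensity_ne_top {Λ : Set Plane} {s : ℝ} (hs : 0 ≤ s)
    (hΛ : ∀ r, s < r → beurlingDensity r Λ ≠ ⊤) : beurlingDim Λ ≤ s :=
  Real.sSup_le (fun r ⟨_, hr⟩ => not_lt.1 fun hsr => hΛ r hsr hr) hs

lemma expFn_continuous (p : Plane) : Continuous (expFn p) := by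
  unfold expFn
  fun_prop

lemma conj_expFn_mul_expFn (p q x : Plane) :
    starRingEnd ℂ (expFn p x) * expFn q x = expFn (q - p) x := by
  simp only [expFn, ← Complex.exp_conj, map_mul, Complex.conj_I, Complex.conj_ofReal,
    ← Complex.exp_add, inner_sub_left]
  congr 1
  push_cast
  ring

lemma inner_expLp (μ : Measure Plane) [IsFiniteMeasure μ] (p q : Plane) :
    inner ℂ (expLp μ p) (expLp μ q) = ∫ x, expFn (q - p) x ∂μ := by
  rw [L2.inner_def]
  refine integral_congr_ae ?_
  filter_upwards [(expFn_memLp μ p).coeFn_toLp, (expFn_memLp μ q).coeFn_toLp] with x hp hq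
  rw [expLp, expLp, hp, hq, RCLike.inner_apply, mul_comm, conj_expFn_mul_expFn]

lemma integral_muRB {f : Plane → ℂ} (hf : Continuous f) :
    ∫ x, f x ∂muRB = ∫ t in (0:ℝ)..1, f (pt t 0) := by
  rw [muRB, integral_map measurable_pt0.aemeasurable hf.aestronglyMeasurable,
    integral_Icc_eq_integral_Ioc, intervalIntegral.integral_of_le zero_le_one]

lemma expFn_pt (p : Plane) (t : ℝ) :
    expFn p (pt t 0) = Complex.exp (-(2 * Real.pi * p 0 * Complex.I) * t) := by
  have hinner : inner ℝ p (pt t 0) = p 0 * t := by simp [pt, PiLp.inner_apply, mul_comm]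
  rw [expFn, hinner]
  push_cast
  ring_nf

lemma lipschitzWith_apply_zero : LipschitzWith 1 fun p : Plane => p 0 :=
  LipschitzWith.of_dist_le_mul fun p q => by simpa using PiLp.dist_apply_le p q 0

lemma pairwise_one_le_abs_sub_of_isOrthogonalSet {Λ : Set Plane} (h : IsOrthogonalSet muRB Λ) :
    Λ.Pairwise fun p q => 1 ≤ |p 0 - q 0| := by
  intro p hp q hq hpq
  have horth : ∫ t in (0:ℝ)..1, Complex.exp (-(2 * Real.pi * (q - p) 0 * Complex.I) * t) = 0 := by
    have : inner ℂ (expLp muRB p) (expLp muRB q) = 0 :=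
      h.2 (i := ⟨p, hp⟩) (j := ⟨q, hq⟩) fun hpq' => hpq (congrArg Subtype.val hpq')
    simpa only [inner_expLp, integral_muRB (expFn_continuous _), expFn_pt] using this
  obtain ⟨n, hn0, hn⟩ := exists_int_of_intervalIntegral_exp_eq_zero horth
  have hpq_eq : p 0 - q 0 = n := by
    have h2piI : 2 * Real.pi * Complex.I ≠ 0 := by simp [Real.pi_ne_zero]
    have : ((p 0 - q 0 : ℝ) : ℂ) = n := by
      refine mul_right_cancel₀ h2piI ?_
      rw [← hn, PiLp.sub_apply]
      push_cast
      ring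
    exact_mod_cast this
  rw [hpq_eq, ← Int.cast_abs, ← Int.cast_one]
  exact Int.cast_le.2 (Int.one_le_abs hn0)

/-- Every orthogonal set of `μ_{R,B}` has Beurling dimension at most `1`. -/
theorem beurlingDim_le_one_of_orthogonal (Λ : Set Plane)
    (h : IsOrthogonalSet muRB Λ) : beurlingDim Λ ≤ 1 := by
  have hball (x : Plane) (t : ℝ) (ht : 1 ≤ t) :
      ((Λ ∩ ball x t).encard : ℝ≥0∞) ≤ (3 : ℝ≥0) * ENNReal.ofReal t := by
    calc ((Λ ∩ ball x t).encard : ℝ≥0∞)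
        ≤ ENNReal.ofReal (2 * t + 1) := encard_inter_ball_le_of_pairwise lipschitzWith_apply_zero
          (pairwise_one_le_abs_sub_of_isOrthogonalSet h) x (by linarith)
      _ ≤ ENNReal.ofReal (3 * t) := by gcongr; linarith
      _ = (3 : ℝ≥0) * ENNReal.ofReal t := by rw [ENNReal.ofReal_mul zero_le_three]; simp
  exact beurlingDim_le_of_beurlingDensity_ne_top zero_le_one fun r hr =>
    beurlingDensity_ne_top_of_encard_inter_ball_le hball hr.le
end

section
/- The set Λ = {(n, n) : n ∈ ℤ} ⊆ ℝ² is a spectrum of the self-affine measure μ = μ_{R,B} for R = [[2,1],[0,2]] and B = {(0,0),(1,0)}, and it satisfies D_1^+(Λ) ≥ √2 and dim_Be(Λ) = 1. -/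
open MeasureTheory Filter Set Metric
open scoped ENNReal

/-!
The measure `μ` is the image of the Haar probability measure on `ℝ/ℤ` under `t ↦ (t, 0)`, and
along that segment `e_{(n,n)}` restricts to the character `t ↦ e^{-2πint}`. Composition with the
parametrisation is therefore a linear isometry `L²(μ) → L²(ℝ/ℤ)` carrying `{e_λ : λ ∈ Λ}` onto the
Fourier basis, which forces `{e_λ}` to be orthonormal and complete.

A ball of radius `h` meets `Λ` in at most `2h + 1` points, while the ball of radius `√2 (m + ½)`
about the origin contains the `2m + 1` points with `|n| ≤ m`; hence `√2 ≤ D_1^+(Λ) < ∞`. Since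
`D_r^+` is antitone in `r` and becomes infinite below any exponent at which it is positive,
`dim_Be(Λ) = 1`.
-/

section HilbertBasisPullback

variable {ι ι' 𝕜 E F : Type*} [RCLike 𝕜] [NormedAddCommGroup E] [InnerProductSpace 𝕜 E]
  [NormedAddCommGroup F] [InnerProductSpace 𝕜 F]

theorem LinearIsometry.orthonormal_of_apply_eq_hilbertBasis (L : E →ₗᵢ[𝕜] F)
    (b : HilbertBasis ι' 𝕜 F) (e : ι ≃ ι') {v : ι → E} (hv : ∀ i, L (v i) = b (e i)) :
    Orthonormal 𝕜 v := by
  rw [← L.orthonormal_comp_iff, show L ∘ v = b ∘ e from funext hv]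
  exact b.orthonormal.comp e e.injective

theorem LinearIsometry.topologicalClosure_span_eq_top_of_apply_eq_hilbertBasis [CompleteSpace E]
    (L : E →ₗᵢ[𝕜] F) (b : HilbertBasis ι' 𝕜 F) (e : ι ≃ ι') {v : ι → E}
    (hv : ∀ i, L (v i) = b (e i)) :
    (Submodule.span 𝕜 (Set.range v)).topologicalClosure = ⊤ := by
  rw [Submodule.topologicalClosure_eq_top_iff, Submodule.eq_bot_iff]
  intro f hf
  have hLf : L f = 0 := b.repr.injective <| by
    ext j
    rw [b.repr_apply_apply, map_zero, lp.coeFn_zero, Pi.zero_apply, ← e.apply_symm_apply j,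
      ← hv, L.inner_map_map]
    exact (Submodule.mem_orthogonal _ _).mp hf _ (Submodule.subset_span ⟨_, rfl⟩)
  exact L.injective (hLf.trans L.map_zero.symm)

end HilbertBasisPullback

lemma pt_apply_zero (a b : ℝ) : pt a b 0 = a := rfl

lemma pt_apply_one (a b : ℝ) : pt a b 1 = b := rfl

lemma inner_pt_pt (a b c d : ℝ) : (inner ℝ (pt a b) (pt c d) : ℝ) = a * c + b * d := by
  simp [PiLp.inner_apply, Fin.sum_univ_two, pt, mul_comm]

def intDiagonal : Set Plane := Set.range fun n : ℤ => pt (n : ℝ) (n : ℝ)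

lemma pt_intCast_intCast_injective : Function.Injective fun n : ℤ => pt (n : ℝ) (n : ℝ) :=
  fun _ _ h => Int.cast_injective (α := ℝ) (congrArg (fun p : Plane => p 0) h)

section Spectrum

open AddCircle

lemma haarAddCircle_eq_volume_one : (haarAddCircle : Measure (AddCircle (1 : ℝ))) = volume := by
  simp [volume_eq_smul_haarAddCircle]

lemma muRB_eq_map_restrict_Ioc :
    muRB = Measure.map (fun x : ℝ => pt x 0) (volume.restrict (Ioc 0 1)) := by
  rw [muRB, Measure.restrict_congr_set Ioc_ae_eq_Icc]

noncomputable def circleToSegment (t : AddCircle (1 : ℝ)) : Plane := pt (equivIoc 1 0 t) 0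

lemma measurePreserving_circleToSegment :
    MeasurePreserving circleToSegment haarAddCircle muRB := by
  have hsegment : MeasurePreserving (fun x : ℝ => pt x 0) (volume.restrict (Ioc 0 (0 + 1))) muRB :=
    ⟨measurable_pt0, by rw [zero_add, muRB_eq_map_restrict_Ioc]⟩
  rw [haarAddCircle_eq_volume_one]
  exact hsegment.comp <|
    (measurePreserving_subtype_coe measurableSet_Ioc).comp (measurePreserving_equivIoc 1)

lemma expFn_pt_intCast_comp_circleToSegment (n : ℤ) :
    expFn (pt n n) ∘ circleToSegment = fourier (-n) := by
  ext t
  conv_rhs => rw [← coe_equivIoc (p := 1) (a := 0) (y := t)]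
  simp only [Function.comp_apply, circleToSegment, expFn, inner_pt_pt, fourier_coe_apply]
  congr 1
  push_cast
  ring

lemma compMeasurePreservingₗᵢ_circleToSegment_expLp (n : ℤ) :
    Lp.compMeasurePreservingₗᵢ ℂ circleToSegment measurePreserving_circleToSegment
      (expLp muRB (pt n n)) = fourierBasis (-n) := by
  rw [coe_fourierBasis]
  refine Lp.ext ((Lp.coeFn_compMeasurePreserving _ _).trans ?_)
  filter_upwards [measurePreserving_circleToSegment.quasiMeasurePreserving.ae_eq_comp
      (expFn_memLp muRB (pt n n)).coeFn_toLp, coeFn_fourierLp 2 (-n)] with t hexp hfourier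
  rw [hfourier, Function.comp_apply, ← expFn_pt_intCast_comp_circleToSegment]
  exact hexp

theorem isSpectrum_muRB_intDiagonal : IsSpectrum muRB intDiagonal := by
  let e : intDiagonal ≃ ℤ :=
    (Equiv.ofInjective _ pt_intCast_intCast_injective).symm.trans (Equiv.neg ℤ)
  have hv : ∀ lam : intDiagonal,
      Lp.compMeasurePreservingₗᵢ ℂ circleToSegment measurePreserving_circleToSegment
        (expLp muRB lam) = fourierBasis (e lam) := by
    rintro ⟨_, n, rfl⟩
    rw [compMeasurePreservingₗᵢ_circleToSegment_expLp]
    exact congrArg (fun m => fourierBasis (-m))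
      (Equiv.ofInjective_symm_apply pt_intCast_intCast_injective n).symm
  exact ⟨LinearIsometry.orthonormal_of_apply_eq_hilbertBasis _ _ e hv,
    LinearIsometry.topologicalClosure_span_eq_top_of_apply_eq_hilbertBasis _ _ e hv⟩

end Spectrum

section BeurlingDensity

open scoped Topology

variable (Λ : Set Plane)

lemma ENNReal.div_ofReal_rpow_eq_mul (a : ℝ≥0∞) {h : ℝ} (hh : 0 < h) (r s : ℝ) :
    a / ENNReal.ofReal (h ^ r) = a / ENNReal.ofReal (h ^ s) * ENNReal.ofReal (h ^ (s - r)) := by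
  have hpos : ENNReal.ofReal (h ^ (s - r)) ≠ 0 := (ENNReal.ofReal_pos.mpr (by positivity)).ne'
  have hsplit : ENNReal.ofReal (h ^ s) = ENNReal.ofReal (h ^ r) * ENNReal.ofReal (h ^ (s - r)) := by
    rw [← ENNReal.ofReal_mul (by positivity), ← Real.rpow_add hh, add_sub_cancel]
  rw [hsplit, ← ENNReal.mul_div_mul_right a _ hpos ENNReal.ofReal_ne_top, div_eq_mul_inv,
    div_eq_mul_inv, mul_right_comm]

lemma iSup_encard_div_rpow_eq_mul {h : ℝ} (hh : 0 < h) (r s : ℝ) :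
    ⨆ x : Plane, ((Λ ∩ ball x h).encard : ℝ≥0∞) / ENNReal.ofReal (h ^ r) =
      (⨆ x : Plane, ((Λ ∩ ball x h).encard : ℝ≥0∞) / ENNReal.ofReal (h ^ s)) *
        ENNReal.ofReal (h ^ (s - r)) := by
  simp_rw [ENNReal.div_ofReal_rpow_eq_mul _ hh r s]
  exact (ENNReal.iSup_mul ..).symm

lemma antitone_beurlingDensity : Antitone fun r => beurlingDensity r Λ := by
  intro r s hrs
  refine limsup_le_limsup ?_
  filter_upwards [eventually_ge_atTop 1] with h hh
  rw [iSup_encard_div_rpow_eq_mul Λ (one_pos.trans_le hh) r s]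
  exact le_mul_of_one_le_right'
    (ENNReal.one_le_ofReal.mpr (Real.one_le_rpow hh (sub_nonneg.mpr hrs)))

lemma beurlingDensity_eq_top_of_lt {r s : ℝ} (hrs : r < s) (hs : beurlingDensity s Λ ≠ 0) :
    beurlingDensity r Λ = ⊤ := by
  have hratio : (fun h : ℝ =>
      ⨆ x : Plane, ((Λ ∩ ball x h).encard : ℝ≥0∞) / ENNReal.ofReal (h ^ r)) =ᶠ[atTop]
      (fun h : ℝ => ⨆ x : Plane, ((Λ ∩ ball x h).encard : ℝ≥0∞) / ENNReal.ofReal (h ^ s)) *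
        fun h : ℝ => ENNReal.ofReal (h ^ (s - r)) := by
    filter_upwards [eventually_gt_atTop 0] with h hh
    exact iSup_encard_div_rpow_eq_mul Λ hh r s
  have hgrowth : Tendsto (fun h : ℝ => ENNReal.ofReal (h ^ (s - r))) atTop (𝓝 ⊤) :=
    ENNReal.tendsto_ofReal_atTop.comp (tendsto_rpow_atTop (sub_pos.mpr hrs))
  rw [beurlingDensity, limsup_congr hratio]
  refine top_unique ?_
  calc ⊤ = beurlingDensity s Λ * ⊤ := (ENNReal.mul_top hs).symm
    _ ≤ _ := by
      rw [← hgrowth.liminf_eq]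
      exact ENNReal.le_limsup_mul

theorem beurlingDim_eq_of_beurlingDensity_ne_zero_ne_top {s : ℝ} (hs : 0 < s)
    (h0 : beurlingDensity s Λ ≠ 0) (htop : beurlingDensity s Λ ≠ ⊤) : beurlingDim Λ = s := by
  have hset : {r : ℝ | 0 < r ∧ beurlingDensity r Λ = ⊤} = Ioo 0 s := by
    ext r
    refine ⟨fun ⟨hr, hr_top⟩ => ⟨hr, ?_⟩, fun hr => ⟨hr.1, beurlingDensity_eq_top_of_lt Λ hr.2 h0⟩⟩
    by_contra! hsr
    exact htop (top_unique (hr_top ▸ antitone_beurlingDensity Λ hsr))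
  rw [beurlingDim, hset, csSup_Ioo hs]

end BeurlingDensity

section IntDiagonal

lemma norm_pt_self (a : ℝ) : ‖pt a a‖ = √2 * |a| := by
  rw [EuclideanSpace.norm_eq, Fin.sum_univ_two, pt_apply_zero, pt_apply_one, Real.norm_eq_abs,
    sq_abs, ← two_mul, Real.sqrt_mul zero_le_two, Real.sqrt_sq_eq_abs]

lemma abs_sub_le_dist_pt (a b : ℝ) (x : Plane) : |a - x 0| ≤ dist (pt a b) x :=
  PiLp.dist_apply_le (pt a b) x 0

lemma encard_intDiagonal_inter_ball_le (x : Plane) {h : ℝ} (hh : 0 ≤ h) :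
    ((intDiagonal ∩ ball x h).encard : ℝ≥0∞) ≤ ENNReal.ofReal (2 * h + 1) := by
  let window := Finset.Icc ⌈x 0 - h⌉ ⌊x 0 + h⌋
  have hsub : intDiagonal ∩ ball x h ⊆ (fun n : ℤ => pt (n : ℝ) (n : ℝ)) '' window := by
    rintro _ ⟨⟨n, rfl⟩, hn⟩
    have hclose := abs_lt.mp ((abs_sub_le_dist_pt _ _ x).trans_lt (mem_ball.mp hn))
    exact ⟨n, Finset.mem_Icc.mpr ⟨Int.ceil_le.mpr (by linarith), Int.le_floor.mpr (by linarith)⟩,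
      rfl⟩
  have hcard : ((window.card : ℤ) : ℝ) ≤ 2 * h + 1 := by
    rw [Int.card_Icc, Int.toNat_eq_max, Int.cast_max, Int.cast_zero]
    refine max_le ?_ (by linarith)
    push_cast
    linarith [Int.floor_le (x 0 + h), Int.le_ceil (x 0 - h)]
  calc ((intDiagonal ∩ ball x h).encard : ℝ≥0∞)
      ≤ (window.card : ℝ≥0∞) := by
        rw [← ENat.toENNReal_coe, ENat.toENNReal_le, ← Set.encard_coe_eq_coe_finsetCard]
        exact (Set.encard_mono hsub).trans (Set.encard_image_le _ _)
    _ ≤ ENNReal.ofReal (2 * h + 1) := by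
        rw [← ENNReal.ofReal_natCast]
        exact ENNReal.ofReal_le_ofReal (by exact_mod_cast hcard)

lemma natCast_le_encard_intDiagonal_inter_ball_zero (m : ℕ) :
    ((2 * m + 1 : ℕ) : ℝ≥0∞) ≤ (intDiagonal ∩ ball 0 (√2 * (m + 1 / 2))).encard := by
  let window := Finset.Icc (-(m : ℤ)) m
  have hsub : (fun n : ℤ => pt (n : ℝ) (n : ℝ)) '' window ⊆
      intDiagonal ∩ ball 0 (√2 * (m + 1 / 2)) := by
    rintro _ ⟨n, hn, rfl⟩
    have hn : |(n : ℝ)| ≤ m := abs_le.mpr (by exact_mod_cast Finset.mem_Icc.mp hn)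
    refine ⟨⟨n, rfl⟩, ?_⟩
    rw [mem_ball_zero_iff, norm_pt_self]
    have hsqrt := Real.sqrt_pos.mpr (zero_lt_two' ℝ)
    nlinarith
  have hcard : window.card = 2 * m + 1 := by
    rw [Int.card_Icc]
    omega
  rw [← hcard, ← ENat.toENNReal_coe, ENat.toENNReal_le, ← Set.encard_coe_eq_coe_finsetCard,
    ← pt_intCast_intCast_injective.injOn.encard_image]
  exact Set.encard_mono hsub

lemma sqrt_two_le_beurlingDensity_one_intDiagonal :
    ENNReal.ofReal √2 ≤ beurlingDensity 1 intDiagonal := by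
  have hradius : Tendsto (fun m : ℕ => √2 * (m + 1 / 2)) atTop atTop :=
    (tendsto_atTop_add_const_right _ _ tendsto_natCast_atTop_atTop).const_mul_atTop
      (Real.sqrt_pos.mpr zero_lt_two)
  refine le_limsup_of_frequently_le (hradius.frequently (Eventually.frequently
    (Eventually.of_forall fun m => ?_))) (by isBoundedDefault)
  have hmul : √2 * (√2 * (m + 1 / 2)) = ((2 * m + 1 : ℕ) : ℝ) := by
    rw [← mul_assoc, Real.mul_self_sqrt zero_le_two]
    push_cast
    ring
  refine le_iSup_of_le 0 ?_
  rw [Real.rpow_one,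
    ENNReal.le_div_iff_mul_le (Or.inl (by positivity)) (Or.inl ENNReal.ofReal_ne_top),
    ← ENNReal.ofReal_mul (Real.sqrt_nonneg 2), hmul, ENNReal.ofReal_natCast]
  exact natCast_le_encard_intDiagonal_inter_ball_zero m

lemma beurlingDensity_one_intDiagonal_le : beurlingDensity 1 intDiagonal ≤ 3 := by
  refine limsup_le_of_le (by isBoundedDefault) ?_
  filter_upwards [eventually_ge_atTop 1] with h hh
  refine iSup_le fun x => ENNReal.div_le_of_le_mul ?_
  rw [Real.rpow_one, ← ENNReal.ofReal_ofNat 3, ← ENNReal.ofReal_mul zero_le_three]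
  exact (encard_intDiagonal_inter_ball_le x (zero_le_one.trans hh)).trans
    (ENNReal.ofReal_le_ofReal (by linarith))

end IntDiagonal

/-- The diagonal `Λ = {(n, n) : n ∈ ℤ}` is a spectrum of `μ_{R,B}` with
`D_1^+(Λ) ≥ √2` and `dim_Be(Λ) = 1`. -/
theorem isSpectrum_muRB_diagonal :
    IsSpectrum muRB (Set.range fun n : ℤ => pt (n : ℝ) (n : ℝ)) ∧
      ENNReal.ofReal (Real.sqrt 2) ≤
        beurlingDensity 1 (Set.range fun n : ℤ => pt (n : ℝ) (n : ℝ)) ∧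
      beurlingDim (Set.range fun n : ℤ => pt (n : ℝ) (n : ℝ)) = 1 := by
  have hlower := sqrt_two_le_beurlingDensity_one_intDiagonal
  refine ⟨isSpectrum_muRB_intDiagonal, hlower,
    beurlingDim_eq_of_beurlingDensity_ne_zero_ne_top _ one_pos ?_ ?_⟩
  · exact ((ENNReal.ofReal_pos.mpr (by positivity)).trans_le hlower).ne'
  · exact ne_top_of_le_ne_top ENNReal.ofNat_ne_top beurlingDensity_one_intDiagonal_le
end
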